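/- Let f : [0,1]^k → ℝ and g : [0,1]^{n-k} → ℝ be continuous functions (1 ≤ k ≤ n-1), and define (fg)(t_1,...,t_n) = f(t_1,...,t_k) g(t_{k+1},...,t_n). Then for any p ≥ 1, the p-variation of fg on [0,1]^n satisfies V_p(fg ; [0,1]^n) ≤ V_p(f ; [0,1]^k) · V_p(g ; [0,1]^{n-k}). -/

import Mathlib

open Finset

/-- Rectangular increment of an `n`-variable function over the box with
corners `a` and `b`: the alternating sum
`∑_{σ∈{0,1}^n} (-1)^{#{i : σ_i = 0}} h(u^σ)` with `u_i^0 = a_i`, `u_i^1 = b_i`. -/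
def rectIncr {n : ℕ} (h : (Fin n → ℝ) → ℝ) (a b : Fin n → ℝ) : ℝ :=
  ∑ σ : Fin n → Bool,
    (-1 : ℝ) ^ (Finset.univ.filter (fun i => σ i = false)).card *
      h (fun i => if σ i then b i else a i)

/-!
The grid cells of a partition of `[0,1]^(k+l)` are exactly the pairs of a cell of the induced
partition of `[0,1]^k` and one of `[0,1]^l`, and over such a cell the rectangular increment of
`f(x) g(y)` is the product of those of `f` and `g` (the sign `(-1)^#{i : σ i = 0}` splits
along with the vertices `σ`). Hence the `p`-th power sum for `fg` is the product of the `p`-th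
power sums for `f` and `g`, and each of these is bounded by the corresponding `V^p`.
-/

namespace Fin

def piAddEquiv (k l : ℕ) (β : Fin (k + l) → Type*) :
    (∀ i, β i) ≃ (∀ i : Fin k, β (castAdd l i)) × (∀ i : Fin l, β (natAdd k i)) where
  toFun c := (fun i => c (castAdd l i), fun i => c (natAdd k i))
  invFun p := fun i => addCases (motive := β) p.1 p.2 i
  left_inv c := by
    funext i
    induction i using addCases <;> simp
  right_inv p := by ext i <;> simp

theorem sum_pi_add_mul {R : Type*} [NonUnitalNonAssocSemiring R] {k l : ℕ}
    {β : Fin (k + l) → Type*} [∀ i, Fintype (β i)]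
    (F : (∀ i : Fin k, β (castAdd l i)) → R) (G : (∀ i : Fin l, β (natAdd k i)) → R) :
    ∑ c : ∀ i, β i, F (fun i => c (castAdd l i)) * G (fun i => c (natAdd k i))
      = (∑ a, F a) * ∑ b, G b := by
  rw [sum_mul_sum, ← Fintype.sum_prod_type']
  exact Fintype.sum_equiv (piAddEquiv k l β) _ _ fun _ => rfl

theorem card_filter_univ_add {k l : ℕ} (q : Fin (k + l) → Prop) [DecidablePred q] :
    #{i | q i} = #{i : Fin k | q (castAdd l i)} + #{i : Fin l | q (natAdd k i)} := by
  simp only [card_filter, sum_univ_add]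

end Fin

theorem rectIncr_mul_disjoint {k l : ℕ} (f : (Fin k → ℝ) → ℝ) (g : (Fin l → ℝ) → ℝ)
    (a b : Fin (k + l) → ℝ) :
    rectIncr (fun u => f (fun i => u (Fin.castAdd l i)) * g (fun i => u (Fin.natAdd k i))) a b
      = rectIncr f (fun i => a (Fin.castAdd l i)) (fun i => b (Fin.castAdd l i)) *
        rectIncr g (fun i => a (Fin.natAdd k i)) (fun i => b (Fin.natAdd k i)) := by
  unfold rectIncr
  refine (sum_congr rfl fun σ _ => ?_).trans (Fin.sum_pi_add_mul _ _)
  rw [Fin.card_filter_univ_add, pow_add]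
  ring

/-- `∑_cells |h(cell)|^p` over the grid with nodes `t i`; `V_p(h)^p` is its supremum over grids. -/
noncomputable def rectIncrPowSum {n : ℕ} (p : ℝ) (h : (Fin n → ℝ) → ℝ) (m : Fin n → ℕ)
    (t : ∀ i, Fin (m i + 1) → ℝ) : ℝ :=
  ∑ c : ∀ i, Fin (m i), |rectIncr h (fun i => t i (c i).castSucc) (fun i => t i (c i).succ)| ^ p

theorem rectIncrPowSum_nonneg {n : ℕ} (p : ℝ) (h : (Fin n → ℝ) → ℝ) (m : Fin n → ℕ)
    (t : ∀ i, Fin (m i + 1) → ℝ) : 0 ≤ rectIncrPowSum p h m t :=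
  sum_nonneg fun _ _ => Real.rpow_nonneg (abs_nonneg _) _

theorem rectIncrPowSum_mul_disjoint {k l : ℕ} (p : ℝ) (f : (Fin k → ℝ) → ℝ)
    (g : (Fin l → ℝ) → ℝ) (m : Fin (k + l) → ℕ) (t : ∀ i, Fin (m i + 1) → ℝ) :
    rectIncrPowSum p
        (fun u => f (fun i => u (Fin.castAdd l i)) * g (fun i => u (Fin.natAdd k i))) m t
      = rectIncrPowSum p f (fun i => m (Fin.castAdd l i)) (fun i => t (Fin.castAdd l i)) *
        rectIncrPowSum p g (fun i => m (Fin.natAdd k i)) (fun i => t (Fin.natAdd k i)) := by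
  unfold rectIncrPowSum
  refine (sum_congr rfl fun c _ => ?_).trans (Fin.sum_pi_add_mul _ _)
  rw [rectIncr_mul_disjoint, abs_mul, Real.mul_rpow (abs_nonneg _) (abs_nonneg _)]

theorem pVariation_product_disjoint_variables_general (k l : ℕ)
    (p : ℝ)
    (f : (Fin k → ℝ) → ℝ) (g : (Fin l → ℝ) → ℝ)
    (Vf Vg : ℝ) (hVf0 : 0 ≤ Vf) (hVg0 : 0 ≤ Vg)
    (hVf : ∀ (m : Fin k → ℕ) (t : ∀ i, Fin (m i + 1) → ℝ),
      (∀ i, Monotone (t i)) → (∀ i, t i 0 = 0) → (∀ i, t i (Fin.last (m i)) = 1) →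
      ∑ c : (∀ i, Fin (m i)),
        |rectIncr f (fun i => t i (c i).castSucc) (fun i => t i (c i).succ)| ^ p
        ≤ Vf ^ p)
    (hVg : ∀ (m : Fin l → ℕ) (t : ∀ i, Fin (m i + 1) → ℝ),
      (∀ i, Monotone (t i)) → (∀ i, t i 0 = 0) → (∀ i, t i (Fin.last (m i)) = 1) →
      ∑ c : (∀ i, Fin (m i)),
        |rectIncr g (fun i => t i (c i).castSucc) (fun i => t i (c i).succ)| ^ p
        ≤ Vg ^ p) :
    ∀ (m : Fin (k + l) → ℕ) (t : ∀ i, Fin (m i + 1) → ℝ),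
      (∀ i, Monotone (t i)) → (∀ i, t i 0 = 0) → (∀ i, t i (Fin.last (m i)) = 1) →
      ∑ c : (∀ i, Fin (m i)),
        |rectIncr (fun u => f (fun i => u (Fin.castAdd l i)) *
            g (fun i => u (Fin.natAdd k i)))
          (fun i => t i (c i).castSucc) (fun i => t i (c i).succ)| ^ p
        ≤ (Vf * Vg) ^ p := by
  intro m t hmono h0 h1
  have hSf : rectIncrPowSum p f _ _ ≤ Vf ^ p :=
    hVf _ (fun i => t (Fin.castAdd l i)) (fun _ => hmono _) (fun _ => h0 _) (fun _ => h1 _)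
  have hSg : rectIncrPowSum p g _ _ ≤ Vg ^ p :=
    hVg _ (fun i => t (Fin.natAdd k i)) (fun _ => hmono _) (fun _ => h0 _) (fun _ => h1 _)
  calc rectIncrPowSum p _ m t
      = rectIncrPowSum p f _ _ * rectIncrPowSum p g _ _ := rectIncrPowSum_mul_disjoint p f g m t
    _ ≤ Vf ^ p * Vg ^ p :=
      mul_le_mul hSf hSg (rectIncrPowSum_nonneg ..) (Real.rpow_nonneg hVf0 p)
    _ = (Vf * Vg) ^ p := (Real.mul_rpow hVf0 hVg0).symm

/-- If `f` and `g` have no common variables, the `p`-variation of the product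
`fg` on `[0,1]^{k+l}` is bounded by the product of the `p`-variations:
any upper bounds `Vf`, `Vg` for the `p`-variation partition sums of `f`, `g`
yield the bound `Vf · Vg` for the partition sums of `fg`. -/
theorem pVariation_product_disjoint_variables (k l : ℕ) (hk : 1 ≤ k) (hl : 1 ≤ l)
    (p : ℝ) (hp : 1 ≤ p)
    (f : (Fin k → ℝ) → ℝ) (g : (Fin l → ℝ) → ℝ)
    (hf : Continuous f) (hg : Continuous g)
    (Vf Vg : ℝ) (hVf0 : 0 ≤ Vf) (hVg0 : 0 ≤ Vg)
    (hVf : ∀ (m : Fin k → ℕ) (t : ∀ i, Fin (m i + 1) → ℝ),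
      (∀ i, Monotone (t i)) → (∀ i, t i 0 = 0) → (∀ i, t i (Fin.last (m i)) = 1) →
      ∑ c : (∀ i, Fin (m i)),
        |rectIncr f (fun i => t i (c i).castSucc) (fun i => t i (c i).succ)| ^ p
        ≤ Vf ^ p)
    (hVg : ∀ (m : Fin l → ℕ) (t : ∀ i, Fin (m i + 1) → ℝ),
      (∀ i, Monotone (t i)) → (∀ i, t i 0 = 0) → (∀ i, t i (Fin.last (m i)) = 1) →
      ∑ c : (∀ i, Fin (m i)),
        |rectIncr g (fun i => t i (c i).castSucc) (fun i => t i (c i).succ)| ^ p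
        ≤ Vg ^ p) :
    ∀ (m : Fin (k + l) → ℕ) (t : ∀ i, Fin (m i + 1) → ℝ),
      (∀ i, Monotone (t i)) → (∀ i, t i 0 = 0) → (∀ i, t i (Fin.last (m i)) = 1) →
      ∑ c : (∀ i, Fin (m i)),
        |rectIncr (fun u => f (fun i => u (Fin.castAdd l i)) *
            g (fun i => u (Fin.natAdd k i)))
          (fun i => t i (c i).castSucc) (fun i => t i (c i).succ)| ^ p
        ≤ (Vf * Vg) ^ p :=
  pVariation_product_disjoint_variables_general k l p f g Vf Vg hVf0 hVg0 hVf hVg
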